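/- Fix ζ on the unit circle and for k ≥ 1 let f_k(z) = ((1 + conj(ζ)z)/2)^k. Then for β real there exists a constant c > 0 such that ‖f_k‖²_{H²_β} ≥ c(k+1)^{2β−1} for all k ≥ 1. -/

import Mathlib

/-- The `j`-th Taylor coefficient of the peak function power
`f_k(z) = ((1 + conj(ζ) z)/2)^k`, namely `C(k,j) conj(ζ)^j / 2^k`. -/
noncomputable def peakCoeff (ζ : ℂ) (k j : ℕ) : ℂ :=
  (k.choose j : ℂ) * ((starRingEnd ℂ) ζ) ^ j / 2 ^ k

/-- The `H²_β` norm squared of `f_k`, computed from its Taylor coefficients: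
`‖f‖²_β = |a_0|² + ∑_{j≥1} j^{2β} |a_j|²`. -/
noncomputable def peakNormSq (β : ℝ) (ζ : ℂ) (k : ℕ) : ℝ :=
  ‖peakCoeff ζ k 0‖ ^ 2 +
    ∑' j : ℕ, (if j = 0 then 0 else (j : ℝ) ^ (2 * β)) * ‖peakCoeff ζ k j‖ ^ 2

/-!
Since `|ζ| = 1`, the `j`-th coefficient of `f_k` has modulus `C(k,j) / 2^k`, so `4^k ‖f_k‖²_β`
dominates `∑_j j^{2β} C(k,j)²`. Pairing `j` with `k - j`, one of the two indices is at least
`k/2 ≥ (k+1)/4` and at most `k + 1`, so the pair carries weight `≳ (k+1)^{2β}` whatever the sign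
of `β`. Vandermonde's `∑_j C(k,j)² = C(2k,k) ≥ 4^k / (2k+1)` then gives the bound
`‖f_k‖²_β ≳ (k+1)^{2β} / (k+1)`.
-/

open Finset

-- Vanishes at `j = 0`: `peakNormSq` counts the constant term separately, with weight `1`.
noncomputable def hardySobolevWeight (β : ℝ) (j : ℕ) : ℝ :=
  if j = 0 then 0 else (j : ℝ) ^ (2 * β)

lemma hardySobolevWeight_nonneg (β : ℝ) (j : ℕ) : 0 ≤ hardySobolevWeight β j := by
  unfold hardySobolevWeight
  split_ifs <;> positivity

lemma norm_peakCoeff_sq {ζ : ℂ} (hζ : ‖ζ‖ = 1) (k j : ℕ) :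
    ‖peakCoeff ζ k j‖ ^ 2 = (k.choose j : ℝ) ^ 2 / 4 ^ k := by
  simp only [peakCoeff, norm_div, norm_mul, norm_pow, Complex.norm_natCast, Complex.norm_conj, hζ,
    one_pow, mul_one, Complex.norm_ofNat, div_pow]
  rw [← pow_mul, mul_comm, pow_mul]
  norm_num

lemma sum_weight_mul_choose_sq_le_peakNormSq (β : ℝ) {ζ : ℂ} (hζ : ‖ζ‖ = 1) (k : ℕ) :
    (∑ j ∈ range (k + 1), hardySobolevWeight β j * (k.choose j : ℝ) ^ 2) / 4 ^ k ≤
      peakNormSq β ζ k := by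
  have hvanish : ∀ j ∉ range (k + 1),
      hardySobolevWeight β j * ‖peakCoeff ζ k j‖ ^ 2 = 0 := fun j hj => by
    rw [norm_peakCoeff_sq hζ, Nat.choose_eq_zero_of_lt (by simpa using hj)]
    simp
  calc (∑ j ∈ range (k + 1), hardySobolevWeight β j * (k.choose j : ℝ) ^ 2) / 4 ^ k
      = ∑' j, hardySobolevWeight β j * ‖peakCoeff ζ k j‖ ^ 2 := by
        rw [tsum_eq_sum hvanish, sum_div]
        simp only [norm_peakCoeff_sq hζ, mul_div_assoc]
    _ ≤ peakNormSq β ζ k := le_add_of_nonneg_left (sq_nonneg _)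

lemma mul_centralBinom_le_two_mul_sum {R : Type*} [CommSemiring R] [PartialOrder R]
    [IsOrderedRing R] {w : ℕ → R} {a : R} {k : ℕ} (hw : ∀ j ≤ k, a ≤ w j + w (k - j)) :
    a * (2 * k).choose k ≤ 2 * ∑ j ∈ range (k + 1), w j * (k.choose j : R) ^ 2 := by
  have hreflect : ∑ j ∈ range (k + 1), w (k - j) * (k.choose j : R) ^ 2 =
      ∑ j ∈ range (k + 1), w j * (k.choose j : R) ^ 2 := by
    rw [← sum_range_reflect]
    refine sum_congr rfl fun j hj => ?_
    rw [mem_range] at hj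
    rw [add_tsub_cancel_right, Nat.sub_sub_self (by omega), Nat.choose_symm (by omega)]
  calc a * (2 * k).choose k = ∑ j ∈ range (k + 1), a * (k.choose j : R) ^ 2 := by
        rw [← mul_sum, ← Nat.sum_range_choose_sq]; push_cast; rfl
    _ ≤ ∑ j ∈ range (k + 1), (w j + w (k - j)) * (k.choose j : R) ^ 2 :=
        sum_le_sum fun j hj => by
          gcongr
          exact hw j (Nat.lt_succ_iff.mp (mem_range.mp hj))
    _ = 2 * ∑ j ∈ range (k + 1), w j * (k.choose j : R) ^ 2 := by
        simp only [add_mul, sum_add_distrib, hreflect]; ring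

lemma min_mul_rpow_le_rpow {x y c : ℝ} (p : ℝ) (hx : 0 < x) (hc : 0 < c)
    (hlo : x / c ≤ y) (hhi : y ≤ x) :
    min (c ^ (-p)) 1 * x ^ p ≤ y ^ p := by
  have hy : 0 < y := (div_pos hx hc).trans_le hlo
  rcases le_total 0 p with hp | hp
  · calc min (c ^ (-p)) 1 * x ^ p ≤ c ^ (-p) * x ^ p := by gcongr; exact min_le_left _ _
      _ = (x / c) ^ p := by rw [Real.div_rpow hx.le hc.le, Real.rpow_neg hc.le]; ring
      _ ≤ y ^ p := Real.rpow_le_rpow (by positivity) hlo hp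
  · calc min (c ^ (-p)) 1 * x ^ p ≤ 1 * x ^ p := by gcongr; exact min_le_right _ _
      _ ≤ y ^ p := by rw [one_mul]; exact Real.rpow_le_rpow_of_nonpos hy hhi hp

lemma min_mul_rpow_le_hardySobolevWeight_add (β : ℝ) {k j : ℕ} (hk : 1 ≤ k) (hj : j ≤ k) :
    min ((4 : ℝ) ^ (-(2 * β))) 1 * ((k : ℝ) + 1) ^ (2 * β) ≤
      hardySobolevWeight β j + hardySobolevWeight β (k - j) := by
  have hlarge : ∀ i : ℕ, k ≤ 2 * i → i ≤ k →
      min ((4 : ℝ) ^ (-(2 * β))) 1 * ((k : ℝ) + 1) ^ (2 * β) ≤ hardySobolevWeight β i := by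
    intro i hlo hhi
    rw [hardySobolevWeight, if_neg (by omega)]
    have hlo' : ((k + 1 : ℕ) : ℝ) ≤ 4 * i := by exact_mod_cast (by omega : k + 1 ≤ 4 * i)
    have hhi' : (i : ℝ) ≤ k + 1 := by exact_mod_cast (by omega : i ≤ k + 1)
    push_cast at hlo'
    exact min_mul_rpow_le_rpow _ (by positivity) (by norm_num) (by linarith) hhi'
  rcases le_total k (2 * j) with h | h
  · exact (hlarge j h hj).trans (le_add_of_nonneg_right (hardySobolevWeight_nonneg β _))
  · exact (hlarge (k - j) (by omega) (by omega)).trans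
      (le_add_of_nonneg_left (hardySobolevWeight_nonneg β _))

/-- For `ζ` on the unit circle and `f_k(z) = ((1+conj(ζ)z)/2)^k`,
there is a constant `c > 0` with `‖f_k‖²_{H²_β} ≥ c (k+1)^{2β-1}` for all `k ≥ 1`. -/
theorem peak_function_norm_lower_bound (β : ℝ) (ζ : ℂ) (hζ : ‖ζ‖ = 1) :
    ∃ c : ℝ, 0 < c ∧ ∀ k : ℕ, 1 ≤ k →
      c * ((k : ℝ) + 1) ^ (2 * β - 1) ≤ peakNormSq β ζ k := by
  set m : ℝ := min ((4 : ℝ) ^ (-(2 * β))) 1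
  have hm : 0 < m := lt_min (by positivity) one_pos
  refine ⟨m / 4, by positivity, fun k hk => ?_⟩
  set S := ∑ j ∈ range (k + 1), hardySobolevWeight β j * (k.choose j : ℝ) ^ 2
  set P := ((k : ℝ) + 1) ^ (2 * β)
  have hS : m * P * (2 * k).choose k ≤ 2 * S :=
    mul_centralBinom_le_two_mul_sum fun j hj =>
      min_mul_rpow_le_hardySobolevWeight_add β hk hj
  have hcentral : (4 : ℝ) ^ k ≤ 2 * (k + 1) * (2 * k).choose k := by
    calc (4 : ℝ) ^ k ≤ (2 * k + 1) * (2 * k).choose k := by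
          exact_mod_cast Nat.four_pow_le_two_mul_add_one_mul_central_binom k
      _ ≤ 2 * (k + 1) * (2 * k).choose k := by gcongr; linarith
  refine le_trans ?_ (sum_weight_mul_choose_sq_le_peakNormSq β hζ k)
  have hk1 : (0 : ℝ) < k + 1 := by positivity
  rw [Real.rpow_sub hk1, Real.rpow_one, le_div_iff₀ (by positivity)]
  calc m / 4 * (P / (k + 1)) * 4 ^ k
      ≤ m / 4 * (P / (k + 1)) * (2 * (k + 1) * (2 * k).choose k) := by gcongr
    _ = m * P * (2 * k).choose k / 2 := by field_simp; ring
    _ ≤ S := by linarith
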